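/- Let V be the vertex set of a median graph, and fix x₀, x ∈ V and an integer n ≥ 1 with d_nor(x₀,x) ≥ n; let H_n and F_h be as defined. Then [x₀,x] ∩ S_nor(x₀,n) = ⋃_{h ∈ H_n} F_h. Moreover, for each h ∈ H_n, every halfspace k that separates two points of F_h (i.e. F_h ∩ k ≠ ∅ and F_h ∖ k ≠ ∅) crosses h. -/

import Mathlib

open scoped ENNReal

namespace MedianGraph

variable {V : Type*}

/-- The metric interval `[x,y]` in a graph with respect to the edge-path metric. -/
def itv (G : SimpleGraph V) (x y : V) : Set V :=
  {z | G.dist x z + G.dist z y = G.dist x y}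

/-- A subset of the vertex set is convex if it contains every interval between
two of its points. -/
def Cvx (G : SimpleGraph V) (S : Set V) : Prop :=
  ∀ a ∈ S, ∀ b ∈ S, itv G a b ⊆ S

/-- A median graph: a connected graph in which every triple of vertices has a
unique median. -/
def IsMedianGraph (G : SimpleGraph V) : Prop :=
  G.Connected ∧ ∀ x y z : V, ∃! m : V,
    m ∈ itv G x y ∧ m ∈ itv G y z ∧ m ∈ itv G z x

/-- A halfspace: a subset which is nonempty, proper, convex with convex complement. -/
def IsHalfspace (G : SimpleGraph V) (h : Set V) : Prop :=
  h.Nonempty ∧ hᶜ.Nonempty ∧ Cvx G h ∧ Cvx G hᶜ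

/-- `Hset G x y` is the set of halfspaces containing `x` but not `y`. -/
def Hset (G : SimpleGraph V) (x y : V) : Set (Set V) :=
  {h | IsHalfspace G h ∧ x ∈ h ∧ y ∉ h}

/-- The normal distance `d_nor(x,y)`: the maximum cardinality of a chain (under
inclusion) in `Hset G x y`. -/
noncomputable def dnor (G : SimpleGraph V) (x y : V) : ℕ :=
  sSup {n : ℕ | ∃ c : Set (Set V), c ⊆ Hset G x y ∧ IsChain (· ⊆ ·) c ∧ c.encard = n}

/-- Two halfspaces cross if all four intersections of them and their
complements are nonempty. -/
def Crosses (h k : Set V) : Prop :=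
  (h ∩ k).Nonempty ∧ (h ∩ kᶜ).Nonempty ∧ (hᶜ ∩ k).Nonempty ∧ (hᶜ ∩ kᶜ).Nonempty

/-- `Hn G x₀ x n`: the halfspaces `h` in `Hset G x₀ x` such that the maximum
cardinality of a chain in `{k ∈ H(x₀,x) : k ⊆ h}` equals `n`. -/
noncomputable def Hn (G : SimpleGraph V) (x₀ x : V) (n : ℕ) : Set (Set V) :=
  {h | h ∈ Hset G x₀ x ∧
    sSup {m : ℕ | ∃ c : Set (Set V), c ⊆ {k | k ∈ Hset G x₀ x ∧ k ⊆ h} ∧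
      IsChain (· ⊆ ·) c ∧ c.encard = m} = n}

/-- `Fh G x₀ x n h = {w ∈ [x₀,x] ∩ S_nor(x₀,n) : w ∉ h}`. -/
def Fh (G : SimpleGraph V) (x₀ x : V) (n : ℕ) (h : Set V) : Set V :=
  {w | w ∈ itv G x₀ x ∧ dnor G x₀ w = n ∧ w ∉ h}

/-- The graph has dimension at most `η` if every family of pairwise crossing
halfspaces has cardinality at most `η`. -/
def DimLE (G : SimpleGraph V) (η : ℕ) : Prop :=
  ∀ F : Set (Set V), (∀ h ∈ F, IsHalfspace G h) →
    (∀ h ∈ F, ∀ k ∈ F, h ≠ k → Crosses h k) → F.encard ≤ η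

end MedianGraph

open MedianGraph

/-!
A point `w ∈ [x₀,x]` with `d_nor(x₀,w) = n` lies in `F_h` for the top `h` of a longest chain in
`H(x₀,w)`: that chain lies in `H(x₀,x)` below `h`, and nothing below `h` separates more, so
`h ∈ H_n`. Conversely, if `w ∈ F_h` and a halfspace `K ⊋ h` misses `w`, putting `K` on top of a
longest chain below `h` gives a chain of length `n + 1` in `H(x₀,w)`. Hence a halfspace separating
two points of `F_h ⊆ hᶜ` can neither contain `h` nor be disjoint from it.
-/

-- An unbounded set of naturals has the junk supremum `0`.
theorem Nat.bddAbove_of_sSup_ne_zero {s : Set ℕ} (hs : sSup s ≠ 0) : BddAbove s := by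
  by_contra hb
  exact hs (by rw [csSup_of_not_bddAbove hb, csSup_empty]; rfl)

theorem Nat.sSup_mem_of_ne_zero {s : Set ℕ} (hs : sSup s ≠ 0) : sSup s ∈ s :=
  Nat.sSup_mem (Set.nonempty_iff_ne_empty.2 fun he => hs (by rw [he, csSup_empty]; rfl))
    (Nat.bddAbove_of_sSup_ne_zero hs)

theorem IsChain.exists_forall_le_of_finite {α : Type*} [Preorder α] {c : Set α}
    (hc : IsChain (· ≤ ·) c) (hfin : c.Finite) (hne : c.Nonempty) :
    ∃ a ∈ c, ∀ b ∈ c, b ≤ a := by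
  obtain ⟨a, ha, hmax⟩ := hfin.exists_maximal hne
  exact ⟨a, ha, fun b hb => (hc.total hb ha).elim id (hmax hb)⟩

namespace MedianGraph

variable {V : Type*}

def chainCards (A : Set (Set V)) : Set ℕ :=
  {m | ∃ c : Set (Set V), c ⊆ A ∧ IsChain (· ⊆ ·) c ∧ c.encard = m}

def Hbelow (G : SimpleGraph V) (x₀ x : V) (h : Set V) : Set (Set V) :=
  {k | k ∈ Hset G x₀ x ∧ k ⊆ h}

theorem dnor_eq_sSup_chainCards (G : SimpleGraph V) (x y : V) :
    dnor G x y = sSup (chainCards (Hset G x y)) := rfl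

theorem mem_Hn {G : SimpleGraph V} {x₀ x : V} {n : ℕ} {h : Set V} :
    h ∈ Hn G x₀ x n ↔ h ∈ Hset G x₀ x ∧ sSup (chainCards (Hbelow G x₀ x h)) = n := Iff.rfl

theorem chainCards_mono {A B : Set (Set V)} (hAB : A ⊆ B) : chainCards A ⊆ chainCards B :=
  fun _ ⟨c, hcA, hc⟩ => ⟨c, hcA.trans hAB, hc⟩

theorem le_of_mem_chainCards {A : Set (Set V)} {m : ℕ} (hA : sSup (chainCards A) ≠ 0)
    (hm : m ∈ chainCards A) : m ≤ sSup (chainCards A) :=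
  le_csSup (Nat.bddAbove_of_sSup_ne_zero hA) hm

theorem succ_mem_chainCards_of_forall_subset {A c : Set (Set V)} {K : Set V} {m : ℕ}
    (hcA : c ⊆ A) (hc : IsChain (· ⊆ ·) c) (hcard : c.encard = m) (hKA : K ∈ A) (hKc : K ∉ c)
    (hcK : ∀ k ∈ c, k ⊆ K) : m + 1 ∈ chainCards A := by
  refine ⟨insert K c, Set.insert_subset hKA hcA, hc.insert fun k hk _ => .inr (hcK k hk), ?_⟩
  rw [Set.encard_insert_of_notMem hKc, hcard]
  rfl

theorem IsHalfspace.compl {G : SimpleGraph V} {h : Set V} (hh : IsHalfspace G h) :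
    IsHalfspace G hᶜ := by
  obtain ⟨hne, hcne, hcvx, hccvx⟩ := hh
  exact ⟨hcne, (compl_compl h).symm ▸ hne, hccvx, (compl_compl h).symm ▸ hcvx⟩

theorem Hset_subset_of_mem_itv {G : SimpleGraph V} {x₀ x w : V} (hw : w ∈ itv G x₀ x) :
    Hset G x₀ w ⊆ Hset G x₀ x :=
  fun _ ⟨hk, hx₀, hwk⟩ => ⟨hk, hx₀, fun hx => hwk (hk.2.2.1 x₀ hx₀ x hx hw)⟩

theorem Hbelow_subset_Hset {G : SimpleGraph V} {x₀ x w : V} {h : Set V} (hw : w ∉ h) :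
    Hbelow G x₀ x h ⊆ Hset G x₀ w :=
  fun _ ⟨⟨hk, hx₀, _⟩, hkh⟩ => ⟨hk, hx₀, fun hwk => hw (hkh hwk)⟩

theorem exists_mem_Hn_notMem {G : SimpleGraph V} {x₀ x w : V} (hw : w ∈ itv G x₀ x)
    (hdw : dnor G x₀ w ≠ 0) : ∃ h ∈ Hn G x₀ x (dnor G x₀ w), w ∉ h := by
  obtain ⟨c, hcw, hc, hcard⟩ := Nat.sSup_mem_of_ne_zero hdw
  have hcne : c.Nonempty := by
    rw [← Set.encard_ne_zero, hcard]
    exact_mod_cast hdw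
  obtain ⟨h, hhc, hch⟩ :=
    hc.exists_forall_le_of_finite (Set.finite_of_encard_eq_coe hcard) hcne
  have hwh : w ∉ h := (hcw hhc).2.2
  have hcbelow : dnor G x₀ w ∈ chainCards (Hbelow G x₀ x h) :=
    ⟨c, fun k hk => ⟨Hset_subset_of_mem_itv hw (hcw hk), hch k hk⟩, hc, hcard⟩
  refine ⟨h, mem_Hn.2 ⟨Hset_subset_of_mem_itv hw (hcw hhc), ?_⟩, hwh⟩
  exact IsGreatest.csSup_eq
    ⟨hcbelow, fun m hm => le_of_mem_chainCards hdw (chainCards_mono (Hbelow_subset_Hset hwh) hm)⟩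

theorem not_ssubset_of_mem_Fh {G : SimpleGraph V} {x₀ x w : V} {n : ℕ} {h K : Set V}
    (hn : n ≠ 0) (hh : h ∈ Hn G x₀ x n) (hw : w ∈ Fh G x₀ x n h) (hK : IsHalfspace G K)
    (hwK : w ∉ K) : ¬ h ⊂ K := by
  intro hhK
  obtain ⟨hhH, hsup⟩ := mem_Hn.1 hh
  obtain ⟨-, hdw, hwh⟩ := hw
  obtain ⟨c, hcA, hc, hcard⟩ := Nat.sSup_mem_of_ne_zero (hsup.trans_ne hn)
  rw [hsup] at hcard
  have hsucc : n + 1 ∈ chainCards (Hset G x₀ w) :=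
    succ_mem_chainCards_of_forall_subset (hcA.trans (Hbelow_subset_Hset hwh)) hc hcard
      ⟨hK, hhK.subset hhH.2.1, hwK⟩ (fun hKc => hhK.not_subset (hcA hKc).2)
      (fun k hk => (hcA hk).2.trans hhK.subset)
  have := le_of_mem_chainCards (hdw.trans_ne hn) hsucc
  rw [← dnor_eq_sSup_chainCards, hdw] at this
  omega

theorem compl_inter_nonempty_of_mem_Fh {G : SimpleGraph V} {x₀ x w w' : V} {n : ℕ}
    {h K : Set V} (hn : n ≠ 0) (hh : h ∈ Hn G x₀ x n) (hK : IsHalfspace G K)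
    (hw : w ∈ Fh G x₀ x n h) (hwK : w ∉ K) (hw' : w' ∈ Fh G x₀ x n h) (hw'K : w' ∈ K) :
    (Kᶜ ∩ h).Nonempty := by
  by_contra hempty
  have hhK : h ⊆ K := fun a ha => by_contra fun haK => hempty ⟨a, haK, ha⟩
  exact not_ssubset_of_mem_Fh hn hh hw hK hwK
    ((Set.ssubset_iff_of_subset hhK).2 ⟨w', hw'K, hw'.2.2⟩)

end MedianGraph

theorem normal_sphere_decomposition_general {V : Type*} (G : SimpleGraph V)
    (x₀ x : V) (n : ℕ) (hn : 1 ≤ n) :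
    (itv G x₀ x ∩ {w : V | dnor G x₀ w = n} = ⋃ h ∈ Hn G x₀ x n, Fh G x₀ x n h) ∧
    (∀ h ∈ Hn G x₀ x n, ∀ k : Set V, IsHalfspace G k →
      (Fh G x₀ x n h ∩ k).Nonempty → (Fh G x₀ x n h \ k).Nonempty → Crosses k h) := by
  have hn₀ : n ≠ 0 := Nat.one_le_iff_ne_zero.1 hn
  constructor
  · ext w
    simp only [Set.mem_inter_iff, Set.mem_iUnion₂]
    constructor
    · rintro ⟨hw, rfl⟩
      obtain ⟨h, hh, hwh⟩ := exists_mem_Hn_notMem hw hn₀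
      exact ⟨h, hh, hw, rfl, hwh⟩
    · rintro ⟨h, -, hw, hdw, -⟩
      exact ⟨hw, hdw⟩
  · rintro h hh k hk ⟨w₁, hw₁, hw₁k⟩ ⟨w₂, hw₂, hw₂k⟩
    refine ⟨?_, ⟨w₁, hw₁k, hw₁.2.2⟩, ?_, ⟨w₂, hw₂k, hw₂.2.2⟩⟩
    · simpa only [compl_compl] using
        compl_inter_nonempty_of_mem_Fh hn₀ hh hk.compl hw₁ (not_not_intro hw₁k) hw₂ hw₂k
    · exact compl_inter_nonempty_of_mem_Fh hn₀ hh hk hw₂ hw₂k hw₁ hw₁k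

/-- In a median graph, fix `x₀, x` and an integer `n ≥ 1` with
`d_nor(x₀,x) ≥ n`. Then `[x₀,x] ∩ S_nor(x₀,n) = ⋃_{h ∈ H_n} F_h`, and for every
`h ∈ H_n`, any halfspace `k` separating two points of `F_h` crosses `h`. -/
theorem normal_sphere_decomposition {V : Type*} (G : SimpleGraph V)
    (hG : IsMedianGraph G) (x₀ x : V) (n : ℕ) (hn : 1 ≤ n) (hd : n ≤ dnor G x₀ x) :
    (itv G x₀ x ∩ {w : V | dnor G x₀ w = n} = ⋃ h ∈ Hn G x₀ x n, Fh G x₀ x n h) ∧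
    (∀ h ∈ Hn G x₀ x n, ∀ k : Set V, IsHalfspace G k →
      (Fh G x₀ x n h ∩ k).Nonempty → (Fh G x₀ x n h \ k).Nonempty → Crosses k h) :=
  normal_sphere_decomposition_general G x₀ x n hn
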